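/- Let G be a finite simple graph, let s and t be distinct vertices of G, and let v be a neighbor of s. There exists a chordless s-t path of G containing v if and only if the induced subgraph G \ (N(s) \ {v}) contains a v-t path not passing through s (equivalently, (G \ (N(s) \ {v})) \ {s} contains a v-t path) — here if v = t the trivial path consisting of the edge {s,t} qualifies. -/

import Mathlib

/-- The graph obtained from `G` by deleting all vertices of `S` together with the
edges incident to them (the induced subgraph `G \ S`, kept on the same vertex type:
deleted vertices become isolated). -/
def SimpleGraph.delVerts {V : Type*} (G : SimpleGraph V) (S : Set V) : SimpleGraph V where
  Adj u v := G.Adj u v ∧ u ∉ S ∧ v ∉ S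
  symm := ⟨fun u v ⟨h, hu, hv⟩ => ⟨h.symm, hv, hu⟩⟩
  loopless := ⟨fun u ⟨h, _, _⟩ => G.loopless.irrefl u h⟩

open SimpleGraph Walk
section Aux
variable {V : Type*} {H : SimpleGraph V} {t : V}


/-- extend a chordless path by a vertex adjacent to some vertex on it -/
lemma extend_chordless : ∀ {w : V} (q : H.Walk w t), q.IsPath →
    (∀ a b, a ∈ q.support → b ∈ q.support → H.Adj a b → s(a, b) ∈ q.edges) →
    ∀ u, u ∉ q.support → (∃ x ∈ q.support, H.Adj u x) →
    ∃ r : H.Walk u t, r.IsPath ∧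
      (∀ a b, a ∈ r.support → b ∈ r.support → H.Adj a b → s(a, b) ∈ r.edges) ∧
      (∀ y ∈ r.support, y = u ∨ y ∈ q.support) := by
  intro w q
  induction q with
  | nil =>
    intro _ _ u hu hx
    obtain ⟨x, hxs, hadj⟩ := hx
    simp only [support_nil, List.mem_singleton] at hxs
    subst hxs
    refine ⟨Walk.cons hadj Walk.nil, ?_, ?_, ?_⟩
    · simp [hadj.ne]
    · intro a b ha hb hab
      simp only [support_cons, support_nil, List.mem_cons, List.mem_singleton,
        List.not_mem_nil, or_false] at ha hb
      simp only [edges_cons, edges_nil, List.mem_singleton]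
      rcases ha with rfl | rfl <;> rcases hb with rfl | rfl
      · exact (hab.ne rfl).elim
      · rfl
      · exact Sym2.eq_swap
      · exact (hab.ne rfl).elim
    · intro y hy
      simp only [support_cons, support_nil, List.mem_cons, List.mem_singleton,
        List.not_mem_nil, or_false] at hy
      rcases hy with rfl | rfl
      · exact Or.inl rfl
      · exact Or.inr (by simp)
  | cons h' q₁ ih =>
    rename_i w w₁ _
    intro hpath hchord u hu hx
    have hq₁path : q₁.IsPath := hpath.of_cons
    have hwns : w ∉ q₁.support := ((cons_isPath_iff h' q₁).mp hpath).2
    have hq₁chord : ∀ a b, a ∈ q₁.support → b ∈ q₁.support → H.Adj a b →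
        s(a, b) ∈ q₁.edges := by
      intro a b ha hb hab
      have := hchord a b (by simp [ha]) (by simp [hb]) hab
      simp only [edges_cons, List.mem_cons] at this
      rcases this with he | he
      · rcases Sym2.eq_iff.mp he with ⟨rfl, rfl⟩ | ⟨rfl, rfl⟩
        · exact absurd ha hwns
        · exact absurd hb hwns
      · exact he
    by_cases hcase : ∃ x ∈ q₁.support, H.Adj u x
    · have hu₁ : u ∉ q₁.support := fun hc => hu (by simp [hc])
      obtain ⟨r, hr1, hr2, hr3⟩ := ih hq₁path hq₁chord u hu₁ hcase
      exact ⟨r, hr1, hr2, fun y hy => (hr3 y hy).imp id (by simp +contextual)⟩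
    · obtain ⟨x, hxs, hadj⟩ := hx
      simp only [support_cons, List.mem_cons] at hxs
      have hxw : x = w := by
        rcases hxs with rfl | hxs
        · rfl
        · exact absurd ⟨x, hxs, hadj⟩ hcase
      subst hxw
      refine ⟨Walk.cons hadj (Walk.cons h' q₁), ?_, ?_, ?_⟩
      · exact (cons_isPath_iff _ _).mpr ⟨hpath, hu⟩
      · intro a b ha hb hab
        simp only [support_cons, List.mem_cons] at ha hb
        simp only [edges_cons, List.mem_cons]
        rcases ha with rfl | ha <;> rcases hb with rfl | hb
        · exact (hab.ne rfl).elim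
        · -- a = u, b ∈ (cons h' q₁).support
          rcases hb with rfl | hb
          · exact Or.inl rfl
          · exact absurd ⟨b, hb, hab⟩ hcase
        · rcases ha with rfl | ha
          · exact Or.inl Sym2.eq_swap
          · exact absurd ⟨a, ha, hab.symm⟩ hcase
        · have := hchord a b (by simpa using ha) (by simpa using hb) hab
          simp only [edges_cons, List.mem_cons] at this
          tauto
      · intro y hy
        simp only [support_cons, List.mem_cons] at hy
        rcases hy with rfl | hy
        · exact Or.inl rfl
        · exact Or.inr (by simpa using hy)

lemma exists_chordless_path : ∀ (n : ℕ) {u : V} (p : H.Walk u t), p.length ≤ n →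
    ∃ q : H.Walk u t, q.IsPath ∧
      (∀ a b, a ∈ q.support → b ∈ q.support → H.Adj a b → s(a, b) ∈ q.edges) ∧
      (∀ y ∈ q.support, y ∈ p.support) := by
  classical
  intro n
  induction n with
  | zero =>
    intro u p hp
    cases p with
    | nil =>
      refine ⟨Walk.nil, by simp, ?_, by simp⟩
      intro a b ha hb hab
      simp only [support_nil, List.mem_singleton] at ha hb
      subst ha; subst hb
      exact (hab.ne rfl).elim
    | cons h p' => simp at hp
  | succ n ih =>
    intro u p hp
    cases p with
    | nil =>
      refine ⟨Walk.nil, by simp, ?_, by simp⟩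
      intro a b ha hb hab
      simp only [support_nil, List.mem_singleton] at ha hb
      subst ha; subst hb
      exact (hab.ne rfl).elim
    | cons h p' =>
      rename_i w
      simp only [length_cons, Nat.succ_le_succ_iff] at hp
      by_cases huw : u ∈ p'.support
      · obtain ⟨q, h1, h2, h3⟩ :=
          ih (p'.dropUntil u huw) (le_trans (length_dropUntil_le p' huw) hp)
        refine ⟨q, h1, h2, fun y hy => ?_⟩
        have := support_dropUntil_subset p' huw (h3 y hy)
        simp [this]
      · obtain ⟨q', hq'path, hq'chord, hq'sub⟩ := ih p' hp
        have hu' : u ∉ q'.support := fun hc => huw (hq'sub u hc)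
        obtain ⟨r, hr1, hr2, hr3⟩ :=
          extend_chordless q' hq'path hq'chord u hu' ⟨w, q'.start_mem_support, h⟩
        refine ⟨r, hr1, hr2, fun y hy => ?_⟩
        rcases hr3 y hy with rfl | hy'
        · simp
        · simp [hq'sub y hy']

end Aux

lemma delVerts_support_prop {V : Type*} {G : SimpleGraph V} {S T : Set V} {a b : V}
    (r : ((G.delVerts S).delVerts T).Walk a b) :
    ∀ x ∈ r.support, x = a ∨ (x ∉ S ∧ x ∉ T) := by
  induction r with
  | nil => simp
  | cons h' r₁ ih =>
    intro x hx
    simp only [SimpleGraph.Walk.support_cons, List.mem_cons] at hx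
    rcases hx with rfl | hx
    · exact Or.inl rfl
    · rcases ih x hx with rfl | hok
      · exact Or.inr ⟨h'.1.2.2, h'.2.2⟩
      · exact Or.inr hok

/-- Let `G` be a finite simple graph, `s ≠ t` vertices, and `v` a
neighbor of `s`.  There exists a chordless `s`-`t` path of `G` containing `v` if and
only if `(G \ (N(s) \ {v})) \ {s}` contains a `v`-`t` path (reachability; if `v = t`
this is the trivial single-vertex path, corresponding to the single-edge chordless
path `{s,t}`). -/
theorem exists_chordless_path_through_iff_reachable
    {V : Type*} [Fintype V] (G : SimpleGraph V) (s t : V) (hst : s ≠ t)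
    (v : V) (hv : G.Adj s v) :
    (∃ P : G.Walk s t, P.IsPath ∧
        (∀ a b, a ∈ P.support → b ∈ P.support → G.Adj a b → s(a, b) ∈ P.edges) ∧
        v ∈ P.support) ↔
      ((G.delVerts (G.neighborSet s \ {v})).delVerts {s}).Reachable v t := by
  set H := (G.delVerts (G.neighborSet s \ {v})).delVerts {s} with hH
  have hHadj : ∀ a b, H.Adj a b ↔
      G.Adj a b ∧ a ∉ (G.neighborSet s \ {v}) ∧ b ∉ (G.neighborSet s \ {v}) ∧
        a ≠ s ∧ b ≠ s := by
    intro a b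
    simp only [hH, SimpleGraph.delVerts, Set.mem_singleton_iff]
    tauto
  constructor
  · rintro ⟨P, hPpath, hPchord, hvP⟩
    cases P with
    | nil => exact absurd rfl hst
    | cons h P₁ =>
      rename_i w
      have hsP₁ : s ∉ P₁.support := ((cons_isPath_iff h P₁).mp hPpath).2
      have key : ∀ x, x ∈ P₁.support → G.Adj s x → x = w := by
        intro x hx hsx
        have := hPchord s x (by simp) (by simp [hx]) hsx
        simp only [edges_cons, List.mem_cons] at this
        rcases this with he | he
        · rcases Sym2.eq_iff.mp he with ⟨-, rfl⟩ | ⟨rfl, rfl⟩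
          · rfl
          · exact absurd hx hsP₁
        · exact absurd (P₁.fst_mem_support_of_mem_edges he) hsP₁
      have hvw : v = w := by
        simp only [support_cons, List.mem_cons] at hvP
        rcases hvP with rfl | hvP
        · exact absurd rfl hv.ne
        · exact key v hvP hv
      subst hvw
      have hEdges : ∀ e ∈ P₁.edges, e ∈ H.edgeSet := by
        intro e he
        induction e with
        | _ a b =>
          have hGab : G.Adj a b := P₁.edges_subset_edgeSet he
          have haP : a ∈ P₁.support := P₁.fst_mem_support_of_mem_edges he
          have hbP : b ∈ P₁.support := P₁.snd_mem_support_of_mem_edges he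
          rw [SimpleGraph.mem_edgeSet, hHadj]
          refine ⟨hGab, ?_, ?_, fun hc => hsP₁ (hc ▸ haP), fun hc => hsP₁ (hc ▸ hbP)⟩
          · rintro ⟨hn, hne⟩
            exact hne (key a haP hn)
          · rintro ⟨hn, hne⟩
            exact hne (key b hbP hn)
      exact (P₁.transfer H hEdges).reachable
  · intro hreach
    obtain ⟨p⟩ := hreach
    obtain ⟨q, hqpath, hqchord, -⟩ := exists_chordless_path p.length p le_rfl
    have hsupp : ∀ (a : V) (r : H.Walk a t), ∀ x ∈ r.support,
        x = a ∨ (x ∉ (G.neighborSet s \ {v}) ∧ x ≠ s) := by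
      intro a r x hx
      rcases delVerts_support_prop r x hx with rfl | ⟨h1, h2⟩
      · exact Or.inl rfl
      · exact Or.inr ⟨h1, by simpa using h2⟩
    have hok : ∀ x ∈ q.support, x ∉ (G.neighborSet s \ {v}) ∧ x ≠ s := by
      intro x hx
      rcases hsupp v q x hx with rfl | h
      · exact ⟨fun hc => hc.2 rfl, hv.ne'⟩
      · exact h
    have hle : H ≤ G := fun a b hab => ((hHadj a b).mp hab).1
    have hEd : ∀ e ∈ q.edges, e ∈ G.edgeSet :=
      fun e he => edgeSet_mono hle (q.edges_subset_edgeSet he)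
    refine ⟨Walk.cons hv (q.transfer G hEd), ?_, ?_, ?_⟩
    · refine (cons_isPath_iff _ _).mpr ⟨hqpath.transfer hEd, ?_⟩
      rw [support_transfer]
      exact fun hc => (hok s hc).2 rfl
    · intro a b ha hb hab
      simp only [support_cons, support_transfer, List.mem_cons] at ha hb
      simp only [edges_cons, edges_transfer, List.mem_cons]
      rcases ha with rfl | ha <;> rcases hb with rfl | hb
      · exact (hab.ne rfl).elim
      · have hbv : b = v := by
          by_contra hne
          exact (hok b hb).1 ⟨hab, by simpa using hne⟩
        subst hbv
        exact Or.inl rfl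
      · have hav : a = v := by
          by_contra hne
          exact (hok a ha).1 ⟨hab.symm, by simpa using hne⟩
        subst hav
        exact Or.inl Sym2.eq_swap
      · have hHab : H.Adj a b :=
          (hHadj a b).mpr ⟨hab, (hok a ha).1, (hok b hb).1, (hok a ha).2, (hok b hb).2⟩
        exact Or.inr (hqchord a b ha hb hHab)
    · simp only [support_cons, support_transfer, List.mem_cons]
      exact Or.inr q.start_mem_support
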